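/- Let C be the strictly unital A∞ category over 𝔽₂ with an arbitrary nonempty collection of objects, Hom_C(X,X') = 𝔽₂·x ⊕ 𝔽₂·y for every ordered pair of objects with |x| = 1 and |y| = 0, whose structure maps are m^1 = 0, m^2(y,a) = m^2(a,y) = a for every morphism a, m^2(x,x) = 0, and m^k = 0 for all k ≥ 3 (so each y ∈ Hom_C(X,X) is a strict unit). Then the degree-0 pre-morphism θ : C^∨[−1] → C_Δ of C-bimodules defined by θ^{0|0}(y^∨) = x, θ^{0|0}(x^∨) = y, θ^{0|1}(y^∨, x) = x, θ^{0|1}(x^∨, x) = y, with all other components and all values on other basis inputs vanishing, is an A∞ bimodule quasi-isomorphism. (In the paper this category is the circle category of a simply perturbed Legendrian knot, and θ is the Poincaré duality morphism, giving a weak Calabi–Yau structure of dimension 1.) -/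

import Mathlib

/-! # A common framework for A∞ categories and bimodules over 𝔽₂ -/

abbrev F2 : Type := ZMod 2

/-- Data of a graded 𝔽₂-vector space: a module together with a family of
submodules indexed by ℤ (the grading). -/
structure GradedF2 : Type 1 where
  carrier : Type
  [acg : AddCommGroup carrier]
  [mod : Module F2 carrier]
  grading : ℤ → Submodule F2 carrier

attribute [instance] GradedF2.acg GradedF2.mod

namespace GradedF2

/-- The family of submodules is an internal direct sum decomposition,
i.e. the space is genuinely graded. -/
def IsGraded (V : GradedF2) : Prop := DirectSum.IsInternal V.grading

/-- The shift `V[n]`: gradings are shifted down by `n`; over 𝔽₂ nothing else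
changes. -/
def shift (V : GradedF2) (n : ℤ) : GradedF2 where
  carrier := V.carrier
  grading := fun d => V.grading (d + n)

/-- The graded linear dual: the functional dual to a degree `d` (basis) element
has degree `-d`. -/
noncomputable def dual (V : GradedF2) : GradedF2 where
  carrier := Module.Dual F2 V.carrier
  grading := fun d =>
    { carrier := { f : Module.Dual F2 V.carrier | ∀ e : ℤ, e ≠ -d → ∀ v ∈ V.grading e, f v = 0 }
      add_mem' := by
        intro f g hf hg e he v hv
        simp only [Set.mem_setOf_eq] at hf hg ⊢
        rw [LinearMap.add_apply, hf e he v hv, hg e he v hv, add_zero]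
      zero_mem' := by
        intro e he v hv
        simp
      smul_mem' := by
        intro c f hf e he v hv
        simp only [Set.mem_setOf_eq] at hf ⊢
        rw [LinearMap.smul_apply, hf e he v hv, smul_zero] }

/-- Direct sum of two graded spaces. -/
def prodG (V W : GradedF2) : GradedF2 where
  carrier := V.carrier × W.carrier
  grading := fun d => (V.grading d).prod (W.grading d)

end GradedF2

/-- Cast along an equality of graded vector spaces. -/
def scast {V W : GradedF2} (h : V = W) : V.carrier → W.carrier :=
  fun v => cast (congrArg GradedF2.carrier h) v

/-! ## A∞ categories -/

/-- Data of an A∞ category over 𝔽₂.  The `k`-th structure map has arity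
`k+1`; chains of objects are recorded as functions `ℕ → Obj` (only the
initial values are relevant), and the `i`-th input of `m k X` is a morphism
from `X i` to `X (i+1)`. -/
structure AInfCatData : Type 1 where
  Obj : Type
  Hom : Obj → Obj → GradedF2
  m : ∀ (k : ℕ) (X : ℕ → Obj),
      (∀ i : Fin (k+1), (Hom (X i.1) (X (i.1 + 1))).carrier) →
      (Hom (X 0) (X (k+1))).carrier

/-- The contracted object chain: the block of `j+1` consecutive arrows
starting at position `a` is collapsed to a single arrow. -/
def ctr {Obj : Type} (X : ℕ → Obj) (a j : ℕ) : ℕ → Obj :=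
  fun t => if t ≤ a then X t else X (t + j)

/-- Contract a tuple of composable inputs by applying an inner structure map
of arity `j+1`, starting at position `a`. -/
def ctrIns (C : AInfCatData) (n : ℕ) (X : ℕ → C.Obj)
    (x : ∀ i : Fin n, (C.Hom (X i.1) (X (i.1 + 1))).carrier)
    (a j : ℕ) (h : a + (j+1) ≤ n) :
    ∀ t : Fin (n - (j+1) + 1), (C.Hom (ctr X a j t.1) (ctr X a j (t.1 + 1))).carrier :=
  fun t =>
    if h1 : t.1 < a then
      scast (show C.Hom (X t.1) (X (t.1 + 1)) = C.Hom (ctr X a j t.1) (ctr X a j (t.1 + 1)) by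
        rw [show ctr X a j t.1 = X t.1 from if_pos (by omega),
            show ctr X a j (t.1 + 1) = X (t.1 + 1) from if_pos (by omega)])
        (x ⟨t.1, by have := t.2; omega⟩)
    else if h2 : t.1 = a then
      scast (show C.Hom (X (a + 0)) (X (a + (j+1))) = C.Hom (ctr X a j t.1) (ctr X a j (t.1 + 1)) by
        rw [show ctr X a j t.1 = X (a + 0) from (if_pos (by omega)).trans (congrArg X (by omega)),
            show ctr X a j (t.1 + 1) = X (a + (j+1)) from
              (if_neg (by omega)).trans (congrArg X (by omega))])
        (C.m j (fun u => X (a + u)) (fun u => x ⟨a + u.1, by have := u.2; omega⟩))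
    else
      scast (show C.Hom (X (t.1 + j)) (X (t.1 + j + 1)) = C.Hom (ctr X a j t.1) (ctr X a j (t.1 + 1)) by
        rw [show ctr X a j t.1 = X (t.1 + j) from if_neg (by omega),
            show ctr X a j (t.1 + 1) = X (t.1 + j + 1) from
              (if_neg (by omega)).trans (congrArg X (by omega))])
        (x ⟨t.1 + j, by have := t.2; omega⟩)

/-- The term `m^{outer}(id^{⊗ a} ⊗ m^{j+1} ⊗ id^{⊗ ...})` of the A∞ relations,
evaluated on a tuple of `K+1` composable inputs. -/
def catComp (C : AInfCatData) (K : ℕ) (X : ℕ → C.Obj)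
    (x : ∀ i : Fin (K+1), (C.Hom (X i.1) (X (i.1 + 1))).carrier)
    (a j : ℕ) (h : a + j ≤ K) : (C.Hom (X 0) (X (K+1))).carrier :=
  scast (show C.Hom (ctr X a j 0) (ctr X a j (K - j + 1)) = C.Hom (X 0) (X (K+1)) by
      rw [show ctr X a j 0 = X 0 from if_pos (Nat.zero_le a),
          show ctr X a j (K - j + 1) = X (K+1) from
            (if_neg (by omega)).trans (congrArg X (by omega))])
    (C.m (K - j) (ctr X a j)
      (fun t => ctrIns C (K+1) X x a j (by omega) (Fin.cast (by omega) t)))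

/-- The axioms making `C` an honest A∞ category over 𝔽₂: each structure map is
multilinear (over 𝔽₂, additivity in each slot), has degree `2 - k` (where `k`
is the arity), the Hom spaces are genuinely graded, and the A∞ relations hold. -/
structure IsAInfCat (C : AInfCatData) : Prop where
  graded : ∀ X Y : C.Obj, (C.Hom X Y).IsGraded
  add : ∀ (k : ℕ) (X : ℕ → C.Obj)
      (x : ∀ i : Fin (k+1), (C.Hom (X i.1) (X (i.1 + 1))).carrier)
      (i : Fin (k+1)) (u v : (C.Hom (X i.1) (X (i.1 + 1))).carrier),
      C.m k X (Function.update x i (u + v)) =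
        C.m k X (Function.update x i u) + C.m k X (Function.update x i v)
  deg : ∀ (k : ℕ) (X : ℕ → C.Obj) (d : Fin (k+1) → ℤ)
      (x : ∀ i : Fin (k+1), (C.Hom (X i.1) (X (i.1 + 1))).carrier),
      (∀ i, x i ∈ (C.Hom (X i.1) (X (i.1 + 1))).grading (d i)) →
      C.m k X x ∈ (C.Hom (X 0) (X (k+1))).grading ((∑ i, d i) + (2 - ((k : ℤ) + 1)))
  rel : ∀ (K : ℕ) (X : ℕ → C.Obj)
      (x : ∀ i : Fin (K+1), (C.Hom (X i.1) (X (i.1 + 1))).carrier),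
      (∑ a ∈ Finset.range (K+1), ∑ j ∈ Finset.range (K+1),
        if h : a + j ≤ K then catComp C K X x a j h else 0) = 0

/-- Strict units for an A∞ category. -/
structure IsStrictUnits (C : AInfCatData) (e : ∀ X : C.Obj, (C.Hom X X).carrier) : Prop where
  deg : ∀ X, e X ∈ (C.Hom X X).grading 0
  m_one : ∀ X : C.Obj, C.m 0 (fun _ => X) (fun _ => e X) = 0
  unit_left : ∀ (X : ℕ → C.Obj)
      (x : ∀ i : Fin 2, (C.Hom (X i.1) (X (i.1 + 1))).carrier)
      (h : X 2 = X 1),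
      x 1 = scast (show C.Hom (X 1) (X 1) = C.Hom (X 1) (X 2) by rw [h]) (e (X 1)) →
      C.m 1 X x = scast (show C.Hom (X 0) (X 1) = C.Hom (X 0) (X 2) by rw [h]) (x 0)
  unit_right : ∀ (X : ℕ → C.Obj)
      (x : ∀ i : Fin 2, (C.Hom (X i.1) (X (i.1 + 1))).carrier)
      (h : X 1 = X 0),
      x 0 = scast (show C.Hom (X 0) (X 0) = C.Hom (X 0) (X 1) by rw [h]) (e (X 0)) →
      C.m 1 X x = scast (show C.Hom (X 1) (X 2) = C.Hom (X 0) (X 2) by rw [h]) (x 1)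
  higher : ∀ (k : ℕ), 2 ≤ k → ∀ (X : ℕ → C.Obj)
      (x : ∀ i : Fin (k+1), (C.Hom (X i.1) (X (i.1 + 1))).carrier)
      (t : Fin (k+1)) (h : X (t.1 + 1) = X t.1),
      x t = scast (show C.Hom (X t.1) (X t.1) = C.Hom (X t.1) (X (t.1 + 1)) by rw [h]) (e (X t.1)) →
      C.m k X x = 0

/-! ## A∞ bimodules over a pair of A∞ categories -/

/-- Data of a `C`-`D` bimodule.  The structure map `n r s X Y` takes `r`
composable `C`-inputs along the chain `X`, a module element, and `s`
composable `D`-inputs along the chain `Y`; the module element sits at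
`(X 0, Y s)` and the output at `(X r, Y 0)`. -/
structure BimodData (C D : AInfCatData) : Type 1 where
  space : C.Obj → D.Obj → GradedF2
  n : ∀ (r s : ℕ) (X : ℕ → C.Obj) (Y : ℕ → D.Obj),
      (∀ i : Fin r, (C.Hom (X i.1) (X (i.1 + 1))).carrier) →
      (space (X 0) (Y s)).carrier →
      (∀ i : Fin s, (D.Hom (Y i.1) (Y (i.1 + 1))).carrier) →
      (space (X r) (Y 0)).carrier

/-- Data of a pre-morphism of `C`-`D` bimodules: a collection of component
maps of the same shape as the structure maps. -/
structure PreMorData {C D : AInfCatData} (M N : BimodData C D) : Type where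
  f : ∀ (r s : ℕ) (X : ℕ → C.Obj) (Y : ℕ → D.Obj),
      (∀ i : Fin r, (C.Hom (X i.1) (X (i.1 + 1))).carrier) →
      (M.space (X 0) (Y s)).carrier →
      (∀ i : Fin s, (D.Hom (Y i.1) (Y (i.1 + 1))).carrier) →
      (N.space (X r) (Y 0)).carrier

variable {C D : AInfCatData}

/-- The structure maps of a bimodule, seen as a (degree 1) pre-morphism. -/
def toPre (M : BimodData C D) : PreMorData M M := ⟨M.n⟩

def zeroPre (M N : BimodData C D) : PreMorData M N := ⟨fun _ _ _ _ _ _ _ => 0⟩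

def addPre {M N : BimodData C D} (f g : PreMorData M N) : PreMorData M N :=
  ⟨fun r s X Y c z d => f.f r s X Y c z d + g.f r s X Y c z d⟩

/-- Composition of pre-morphisms:
`(g f)^{r|s} = ∑ g^{r-i|s-j}(id ⊗ f^{i|j} ⊗ id)`, where `f` consumes the
inputs adjacent to the module slot. -/
def compPre {M N P : BimodData C D} (g : PreMorData N P) (f : PreMorData M N) :
    PreMorData M P :=
  ⟨fun r s X Y c z d =>
    ∑ i ∈ Finset.range (r+1), ∑ j ∈ Finset.range (s+1),
      if h : i ≤ r ∧ j ≤ s then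
        scast (show P.space (X (i + (r - i))) (Y 0) = P.space (X r) (Y 0) by
            rw [show X (i + (r - i)) = X r from congrArg X (by omega)])
          (g.f (r - i) (s - j) (fun t => X (i + t)) Y
            (fun t => c ⟨i + t.1, by have := t.2; omega⟩)
            (f.f i j X (fun t => Y ((s - j) + t))
              (fun t => c ⟨t.1, by have := t.2; omega⟩)
              (scast (show M.space (X 0) (Y s) = M.space (X 0) (Y (s - j + j)) by
                  rw [show Y s = Y (s - j + j) from congrArg Y (by omega)]) z)
              (fun t => d ⟨(s - j) + t.1, by have := t.2; omega⟩))
            (fun t => d ⟨t.1, by have := t.2; omega⟩))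
      else 0⟩

/-- Insertion of an inner category structure map (arity `j+1`, starting at
position `a`) into the `C`-inputs of a pre-morphism component. -/
def insC {M N : BimodData C D} (f : PreMorData M N) (r s : ℕ)
    (X : ℕ → C.Obj) (Y : ℕ → D.Obj)
    (c : ∀ i : Fin r, (C.Hom (X i.1) (X (i.1 + 1))).carrier)
    (z : (M.space (X 0) (Y s)).carrier)
    (d : ∀ i : Fin s, (D.Hom (Y i.1) (Y (i.1 + 1))).carrier)
    (a j : ℕ) (h : a + (j+1) ≤ r) : (N.space (X r) (Y 0)).carrier :=
  scast (show N.space (ctr X a j (r - (j+1) + 1)) (Y 0) = N.space (X r) (Y 0) by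
      rw [show ctr X a j (r - (j+1) + 1) = X r from
        (if_neg (by omega)).trans (congrArg X (by omega))])
    (f.f (r - (j+1) + 1) s (ctr X a j) Y
      (ctrIns C r X c a j h)
      (scast (show M.space (X 0) (Y s) = M.space (ctr X a j 0) (Y s) by
          rw [show ctr X a j 0 = X 0 from if_pos (Nat.zero_le a)]) z)
      d)

/-- Insertion of an inner category structure map into the `D`-inputs. -/
def insD {M N : BimodData C D} (f : PreMorData M N) (r s : ℕ)
    (X : ℕ → C.Obj) (Y : ℕ → D.Obj)
    (c : ∀ i : Fin r, (C.Hom (X i.1) (X (i.1 + 1))).carrier)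
    (z : (M.space (X 0) (Y s)).carrier)
    (d : ∀ i : Fin s, (D.Hom (Y i.1) (Y (i.1 + 1))).carrier)
    (a j : ℕ) (h : a + (j+1) ≤ s) : (N.space (X r) (Y 0)).carrier :=
  scast (show N.space (X r) (ctr Y a j 0) = N.space (X r) (Y 0) by
      rw [show ctr Y a j 0 = Y 0 from if_pos (Nat.zero_le a)])
    (f.f r (s - (j+1) + 1) X (ctr Y a j)
      c
      (scast (show M.space (X 0) (Y s) = M.space (X 0) (ctr Y a j (s - (j+1) + 1)) by
          rw [show ctr Y a j (s - (j+1) + 1) = Y s from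
            (if_neg (by omega)).trans (congrArg Y (by omega))]) z)
      (ctrIns D s Y d a j h))

/-- The differential of a pre-morphism. -/
def deltaPre {M N : BimodData C D} (f : PreMorData M N) : PreMorData M N :=
  ⟨fun r s X Y c z d =>
    (compPre (toPre N) f).f r s X Y c z d +
    (compPre f (toPre M)).f r s X Y c z d +
    (∑ a ∈ Finset.range (r+1), ∑ j ∈ Finset.range (r+1),
      if h : a + (j+1) ≤ r then insC f r s X Y c z d a j h else 0) +
    (∑ a ∈ Finset.range (s+1), ∑ j ∈ Finset.range (s+1),
      if h : a + (j+1) ≤ s then insD f r s X Y c z d a j h else 0)⟩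

/-- The axioms making `M` an honest A∞ `C`-`D` bimodule over 𝔽₂. -/
structure IsBimod {C D : AInfCatData} (M : BimodData C D) : Prop where
  add_c : ∀ (r s : ℕ) (X : ℕ → C.Obj) (Y : ℕ → D.Obj)
      (c : ∀ i : Fin r, (C.Hom (X i.1) (X (i.1 + 1))).carrier)
      (i : Fin r) (u v : (C.Hom (X i.1) (X (i.1 + 1))).carrier)
      (z : (M.space (X 0) (Y s)).carrier)
      (d : ∀ i : Fin s, (D.Hom (Y i.1) (Y (i.1 + 1))).carrier),
      M.n r s X Y (Function.update c i (u + v)) z d =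
        M.n r s X Y (Function.update c i u) z d + M.n r s X Y (Function.update c i v) z d
  add_z : ∀ (r s : ℕ) (X : ℕ → C.Obj) (Y : ℕ → D.Obj) c (z z' : (M.space (X 0) (Y s)).carrier) d,
      M.n r s X Y c (z + z') d = M.n r s X Y c z d + M.n r s X Y c z' d
  add_d : ∀ (r s : ℕ) (X : ℕ → C.Obj) (Y : ℕ → D.Obj)
      (c : ∀ i : Fin r, (C.Hom (X i.1) (X (i.1 + 1))).carrier)
      (z : (M.space (X 0) (Y s)).carrier)
      (d : ∀ i : Fin s, (D.Hom (Y i.1) (Y (i.1 + 1))).carrier)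
      (i : Fin s) (u v : (D.Hom (Y i.1) (Y (i.1 + 1))).carrier),
      M.n r s X Y c z (Function.update d i (u + v)) =
        M.n r s X Y c z (Function.update d i u) + M.n r s X Y c z (Function.update d i v)
  deg : ∀ (r s : ℕ) (X : ℕ → C.Obj) (Y : ℕ → D.Obj)
      (dc : Fin r → ℤ) (dz : ℤ) (dd : Fin s → ℤ)
      (c : ∀ i : Fin r, (C.Hom (X i.1) (X (i.1 + 1))).carrier)
      (z : (M.space (X 0) (Y s)).carrier)
      (d : ∀ i : Fin s, (D.Hom (Y i.1) (Y (i.1 + 1))).carrier),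
      (∀ i, c i ∈ (C.Hom (X i.1) (X (i.1 + 1))).grading (dc i)) →
      z ∈ (M.space (X 0) (Y s)).grading dz →
      (∀ i, d i ∈ (D.Hom (Y i.1) (Y (i.1 + 1))).grading (dd i)) →
      M.n r s X Y c z d ∈
        (M.space (X r) (Y 0)).grading
          ((∑ i, dc i) + dz + (∑ i, dd i) + (1 - (r : ℤ) - (s : ℤ)))
  rel : ∀ (r s : ℕ) (X : ℕ → C.Obj) (Y : ℕ → D.Obj)
      (c : ∀ i : Fin r, (C.Hom (X i.1) (X (i.1 + 1))).carrier)
      (z : (M.space (X 0) (Y s)).carrier)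
      (d : ∀ i : Fin s, (D.Hom (Y i.1) (Y (i.1 + 1))).carrier),
      ((compPre (toPre M) (toPre M)).f r s X Y c z d +
        (∑ a ∈ Finset.range (r+1), ∑ j ∈ Finset.range (r+1),
          if h : a + (j+1) ≤ r then insC (toPre M) r s X Y c z d a j h else 0) +
        (∑ a ∈ Finset.range (s+1), ∑ j ∈ Finset.range (s+1),
          if h : a + (j+1) ≤ s then insD (toPre M) r s X Y c z d a j h else 0)) = 0

/-- The axioms for a pre-morphism of degree `dg`: components are multilinear
and have degree `dg - r - s`. -/
structure IsPreMor {M N : BimodData C D} (f : PreMorData M N) (dg : ℤ) : Prop where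
  add_c : ∀ (r s : ℕ) (X : ℕ → C.Obj) (Y : ℕ → D.Obj)
      (c : ∀ i : Fin r, (C.Hom (X i.1) (X (i.1 + 1))).carrier)
      (i : Fin r) (u v : (C.Hom (X i.1) (X (i.1 + 1))).carrier)
      (z : (M.space (X 0) (Y s)).carrier)
      (d : ∀ i : Fin s, (D.Hom (Y i.1) (Y (i.1 + 1))).carrier),
      f.f r s X Y (Function.update c i (u + v)) z d =
        f.f r s X Y (Function.update c i u) z d + f.f r s X Y (Function.update c i v) z d
  add_z : ∀ (r s : ℕ) (X : ℕ → C.Obj) (Y : ℕ → D.Obj) c (z z' : (M.space (X 0) (Y s)).carrier) d,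
      f.f r s X Y c (z + z') d = f.f r s X Y c z d + f.f r s X Y c z' d
  add_d : ∀ (r s : ℕ) (X : ℕ → C.Obj) (Y : ℕ → D.Obj)
      (c : ∀ i : Fin r, (C.Hom (X i.1) (X (i.1 + 1))).carrier)
      (z : (M.space (X 0) (Y s)).carrier)
      (d : ∀ i : Fin s, (D.Hom (Y i.1) (Y (i.1 + 1))).carrier)
      (i : Fin s) (u v : (D.Hom (Y i.1) (Y (i.1 + 1))).carrier),
      f.f r s X Y c z (Function.update d i (u + v)) =
        f.f r s X Y c z (Function.update d i u) + f.f r s X Y c z (Function.update d i v)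
  deg : ∀ (r s : ℕ) (X : ℕ → C.Obj) (Y : ℕ → D.Obj)
      (dc : Fin r → ℤ) (dz : ℤ) (dd : Fin s → ℤ)
      (c : ∀ i : Fin r, (C.Hom (X i.1) (X (i.1 + 1))).carrier)
      (z : (M.space (X 0) (Y s)).carrier)
      (d : ∀ i : Fin s, (D.Hom (Y i.1) (Y (i.1 + 1))).carrier),
      (∀ i, c i ∈ (C.Hom (X i.1) (X (i.1 + 1))).grading (dc i)) →
      z ∈ (M.space (X 0) (Y s)).grading dz →
      (∀ i, d i ∈ (D.Hom (Y i.1) (Y (i.1 + 1))).grading (dd i)) →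
      f.f r s X Y c z d ∈
        (N.space (X r) (Y 0)).grading
          ((∑ i, dc i) + dz + (∑ i, dd i) + (dg - (r : ℤ) - (s : ℤ)))

/-- A bimodule morphism of degree `dg` is a pre-morphism which is closed for
the differential. -/
def IsMorphism {M N : BimodData C D} (f : PreMorData M N) (dg : ℤ) : Prop :=
  IsPreMor f dg ∧ deltaPre f = zeroPre M N

/-- Two pre-morphisms (of degree `dg`) are A∞ homotopic. -/
def Homotopic {M N : BimodData C D} (dg : ℤ) (f g : PreMorData M N) : Prop :=
  ∃ H : PreMorData M N, IsPreMor H (dg - 1) ∧ addPre f g = deltaPre H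

/-- The `(0|0)` differential on the chain complex `M(X,Y)`. -/
def bdiff (M : BimodData C D) (X : C.Obj) (Y : D.Obj) :
    (M.space X Y).carrier → (M.space X Y).carrier :=
  fun z => M.n 0 0 (fun _ => X) (fun _ => Y) (fun i => i.elim0) z (fun i => i.elim0)

/-- The `(0|0)` component of a pre-morphism, as a map `M(X,Y) → N(X,Y)`. -/
def comp00 {M N : BimodData C D} (f : PreMorData M N) (X : C.Obj) (Y : D.Obj) :
    (M.space X Y).carrier → (N.space X Y).carrier :=
  fun z => f.f 0 0 (fun _ => X) (fun _ => Y) (fun i => i.elim0) z (fun i => i.elim0)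

/-- `f` is a quasi-isomorphism: every `(0|0)` component induces an isomorphism
on cohomology (stated elementarily: injectivity and surjectivity of the
induced map on cohomology classes). -/
def QIso {M N : BimodData C D} (f : PreMorData M N) : Prop :=
  ∀ (X : C.Obj) (Y : D.Obj),
    (∀ z, bdiff M X Y z = 0 → (∃ u, comp00 f X Y z = bdiff N X Y u) →
      ∃ w, z = bdiff M X Y w) ∧
    (∀ z', bdiff N X Y z' = 0 →
      ∃ z, bdiff M X Y z = 0 ∧ ∃ u, comp00 f X Y z + z' = bdiff N X Y u)

/-- A naive pre-morphism: only the `(0|0)` components are (possibly) nonzero. -/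
def naivePre (M N : BimodData C D)
    (g : ∀ (X : C.Obj) (Y : D.Obj), (M.space X Y).carrier → (N.space X Y).carrier) :
    PreMorData M N :=
  ⟨fun r s X Y _ z _ =>
    if h : r = 0 ∧ s = 0 then
      scast (show N.space (X 0) (Y 0) = N.space (X r) (Y 0) by rw [h.1])
        (g (X 0) (Y 0)
          (scast (show M.space (X 0) (Y s) = M.space (X 0) (Y 0) by rw [h.2]) z))
    else 0⟩

/-- The naive identity morphism. -/
def idPre (M : BimodData C D) : PreMorData M M := naivePre M M (fun _ _ z => z)

/-! ## Standard constructions of bimodules -/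

/-- The shifted bimodule `M[k]`. -/
def shiftBimod (M : BimodData C D) (k : ℤ) : BimodData C D where
  space := fun X Y => (M.space X Y).shift k
  n := M.n

/-- The mapping cone of a (degree 0) pre-morphism `f : M → N`:
`cone(f)(X,Y) = M(X,Y)[1] ⊕ N(X,Y)`. -/
def coneBimod {M N : BimodData C D} (f : PreMorData M N) : BimodData C D where
  space := fun X Y => ((M.space X Y).shift 1).prodG (N.space X Y)
  n := fun r s X Y c z d =>
    (M.n r s X Y c z.1 d, N.n r s X Y c z.2 d + f.f r s X Y c z.1 d)

/-- The canonical (naive) inclusion `N → cone(f)`. -/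
def coneInc {M N : BimodData C D} (f : PreMorData M N) : PreMorData N (coneBimod f) :=
  naivePre _ _ (fun _ _ z => (0, z))

/-- The canonical (naive) projection `cone(f) → M[1]`. -/
def conePrj {M N : BimodData C D} (f : PreMorData M N) :
    PreMorData (coneBimod f) (shiftBimod M 1) :=
  naivePre _ _ (fun _ _ z => z.1)

/-- The naive projection `cone(f) → N` onto the second component (not in
general a morphism). -/
def coneSnd {M N : BimodData C D} (f : PreMorData M N) : PreMorData (coneBimod f) N :=
  naivePre _ _ (fun _ _ z => z.2)

/-- Turn a plain function into a linear functional when it is one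
(and `0` otherwise); used to define dual bimodules at the level of data. -/
noncomputable def toLin {V : Type} [AddCommGroup V] [Module F2 V] (g : V → F2) :
    Module.Dual F2 V := by
  classical exact if h : ∃ l : Module.Dual F2 V, ⇑l = g then h.choose else 0

/-- The linear dual of a `C`-`D` bimodule, a `D`-`C` bimodule. -/
noncomputable def dualBimod (M : BimodData C D) : BimodData D C where
  space := fun P Q => (M.space Q P).dual
  n := fun r s X Y c z d =>
    let zl : Module.Dual F2 (M.space (Y s) (X 0)).carrier := z
    toLin (fun w => zl (M.n s r Y X d w c))

/-- The adjoint of a pre-morphism `f : M → N`, a pre-morphism `N^∨ → M^∨`. -/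
noncomputable def adjPre {M N : BimodData C D} (f : PreMorData M N) :
    PreMorData (dualBimod N) (dualBimod M) :=
  ⟨fun r s X Y c z d =>
    let zl : Module.Dual F2 (N.space (Y s) (X 0)).carrier := z
    toLin (fun w => zl (f.f s r Y X d w c))⟩

/-- The mapping cocone `cocone(f) = cone(f^∨)[-1]`. -/
noncomputable def coconeBimod {M N : BimodData C D} (f : PreMorData M N) : BimodData D C :=
  shiftBimod (coneBimod (adjPre f)) (-1)

/-- The mapping cylinder `cyl(f) = cone(π_M)[-1]`. -/
def cylBimod {M N : BimodData C D} (f : PreMorData M N) : BimodData C D :=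
  shiftBimod (coneBimod (conePrj f)) (-1)

/-- The mapping cocylinder `cocyl(f) = cocone(π_M)[1]`. -/
noncomputable def cocylBimod {M N : BimodData C D} (f : PreMorData M N) : BimodData D C :=
  shiftBimod (coconeBimod (conePrj f)) 1

/-! ## The diagonal bimodule -/

/-- The object chain obtained by concatenating the `D`-side chain `Y`
(of length `s`) with the `C`-side chain `X`. -/
def diagChain {A : AInfCatData} (X Y : ℕ → A.Obj) (s : ℕ) : ℕ → A.Obj :=
  fun t => if t ≤ s then Y t else X (t - (s+1))

/-- The total tuple of composable inputs for the diagonal bimodule. -/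
def diagTuple (A : AInfCatData) (r s : ℕ) (X Y : ℕ → A.Obj)
    (c : ∀ i : Fin r, (A.Hom (X i.1) (X (i.1 + 1))).carrier)
    (z : (A.Hom (Y s) (X 0)).carrier)
    (d : ∀ i : Fin s, (A.Hom (Y i.1) (Y (i.1 + 1))).carrier) :
    ∀ t : Fin (r + s + 1),
      (A.Hom (diagChain X Y s t.1) (diagChain X Y s (t.1 + 1))).carrier :=
  fun t =>
    if h1 : t.1 < s then
      scast (show A.Hom (Y t.1) (Y (t.1 + 1)) =
          A.Hom (diagChain X Y s t.1) (diagChain X Y s (t.1 + 1)) by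
        rw [show diagChain X Y s t.1 = Y t.1 from if_pos (by omega),
            show diagChain X Y s (t.1 + 1) = Y (t.1 + 1) from if_pos (by omega)])
        (d ⟨t.1, by omega⟩)
    else if h2 : t.1 = s then
      scast (show A.Hom (Y s) (X 0) =
          A.Hom (diagChain X Y s t.1) (diagChain X Y s (t.1 + 1)) by
        rw [show diagChain X Y s t.1 = Y s from (if_pos (by omega)).trans (congrArg Y (by omega)),
            show diagChain X Y s (t.1 + 1) = X 0 from
              (if_neg (by omega)).trans (congrArg X (by omega))])
        z
    else
      scast (show A.Hom (X (t.1 - (s+1))) (X (t.1 - (s+1) + 1)) =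
          A.Hom (diagChain X Y s t.1) (diagChain X Y s (t.1 + 1)) by
        rw [show diagChain X Y s t.1 = X (t.1 - (s+1)) from if_neg (by omega),
            show diagChain X Y s (t.1 + 1) = X (t.1 - (s+1) + 1) from
              (if_neg (by omega)).trans (congrArg X (by omega))])
        (c ⟨t.1 - (s+1), by have := t.2; omega⟩)

/-- The diagonal bimodule of an A∞ category: `n^{r|s} = m^{r+s+1}`. -/
def diagBimod (A : AInfCatData) : BimodData A A where
  space := fun P Q => A.Hom Q P
  n := fun r s X Y c z d =>
    scast (show A.Hom (diagChain X Y s 0) (diagChain X Y s (r + s + 1)) = A.Hom (Y 0) (X r) by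
        rw [show diagChain X Y s 0 = Y 0 from if_pos (Nat.zero_le s),
            show diagChain X Y s (r + s + 1) = X r from
              (if_neg (by omega)).trans (congrArg X (by omega))])
      (A.m (r + s) (diagChain X Y s) (diagTuple A r s X Y c z d))

/-! The circle category: every Hom space is `𝔽₂x ⊕ 𝔽₂y` with `|x| = 1`,
`|y| = 0`, `y` a strict unit and `x · x = 0`. -/

/-- The graded space `𝔽₂x ⊕ 𝔽₂y` (first coordinate `x`, degree 1; second
coordinate `y`, degree 0). -/
def circSpace : GradedF2 where
  carrier := F2 × F2
  grading := fun d =>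
    ((if d = 1 then (⊤ : Submodule F2 F2) else ⊥).prod
      (if d = 0 then (⊤ : Submodule F2 F2) else ⊥))

/-- The product `m²`: `y` is a unit and `x·x = 0`. -/
def circMul (p q : F2 × F2) : F2 × F2 :=
  (p.1 * q.2 + p.2 * q.1, p.2 * q.2)

/-- The circle category on an arbitrary collection `O` of objects. -/
def circCat (O : Type) : AInfCatData where
  Obj := O
  Hom := fun _ _ => circSpace
  m := fun k _ v => if h : k = 1 then circMul (v ⟨1, by omega⟩) (v ⟨0, by omega⟩) else 0

attribute [reducible] circSpace circCat

/-- The Poincaré duality pre-morphism `θ : C^∨[-1] → C_Δ`, with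
`θ^{0|0}(y^∨) = x`, `θ^{0|0}(x^∨) = y`, `θ^{0|1}(y^∨, x) = x`,
`θ^{0|1}(x^∨, x) = y`, and all other components (and values on the other basis
inputs) vanishing. -/
noncomputable def circTheta (O : Type) :
    PreMorData (shiftBimod (dualBimod (diagBimod (circCat O))) (-1))
      (diagBimod (circCat O)) :=
  ⟨fun r s _ _ _ z d =>
    let zl : Module.Dual F2 (F2 × F2) := z
    if r = 0 ∧ s = 0 then
      (zl (0, 1), zl (1, 0))
    else if h : r = 0 ∧ s = 1 then
      ((d ⟨0, by omega⟩).1 * zl (0, 1), (d ⟨0, by omega⟩).1 * zl (1, 0))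
    else 0⟩


/-! ## Helper lemmas -/

@[simp] lemma scast_rfl {V : GradedF2} (h : V = V) (v : V.carrier) : scast h v = v :=
  eq_of_heq (cast_heq _ _)

lemma dual_apply (z : Module.Dual F2 (F2 × F2)) (p : F2 × F2) :
    z p = p.1 * z (1, 0) + p.2 * z (0, 1) := by
  have hp : p = p.1 • ((1:F2), (0:F2)) + p.2 • ((0:F2), (1:F2)) := by
    ext <;> simp
  rw [hp, map_add, map_smul, map_smul, smul_eq_mul, smul_eq_mul]
  rw [← hp]

lemma toLin_eq {V : Type} [AddCommGroup V] [Module F2 V] (g : V → F2)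
    (l : Module.Dual F2 V) (h : ∀ w, g w = l w) : toLin g = l := by
  have he : ∃ l' : Module.Dual F2 V, ⇑l' = g := ⟨l, funext fun w => (h w).symm⟩
  have : toLin g = he.choose := by rw [toLin]; rw [dif_pos he]
  rw [this]
  apply LinearMap.ext
  intro w
  rw [show he.choose w = g w from congrFun he.choose_spec w, h]

lemma mem_circ_grading (p : F2 × F2) (d : ℤ) :
    p ∈ circSpace.grading d ↔ (d ≠ 1 → p.1 = 0) ∧ (d ≠ 0 → p.2 = 0) := by
  simp only [circSpace, Submodule.mem_prod]
  constructor
  · rintro ⟨h1, h2⟩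
    constructor
    · intro hd; rw [if_neg hd] at h1; simpa using h1
    · intro hd; rw [if_neg hd] at h2; simpa using h2
  · rintro ⟨h1, h2⟩
    constructor
    · by_cases hd : d = 1
      · rw [if_pos hd]; trivial
      · rw [if_neg hd]; simpa using h1 hd
    · by_cases hd : d = 0
      · rw [if_pos hd]; trivial
      · rw [if_neg hd]; simpa using h2 hd

lemma circMul_mem {p q : F2 × F2} {dp dq : ℤ}
    (hp : p ∈ circSpace.grading dp) (hq : q ∈ circSpace.grading dq) :
    circMul p q ∈ circSpace.grading (dp + dq) := by
  rw [mem_circ_grading] at hp hq ⊢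
  constructor
  · intro hd
    show p.1 * q.2 + p.2 * q.1 = 0
    have e1 : p.1 * q.2 = 0 := by
      by_cases h1 : dp = 1
      · rw [hq.2 (by omega), mul_zero]
      · rw [hp.1 h1, zero_mul]
    have e2 : p.2 * q.1 = 0 := by
      by_cases h1 : dq = 1
      · rw [hp.2 (by omega), zero_mul]
      · rw [hq.1 h1, mul_zero]
    rw [e1, e2, add_zero]
  · intro hd
    show p.2 * q.2 = 0
    by_cases h1 : dp = 0
    · rw [hq.2 (by omega), mul_zero]
    · rw [hp.2 h1, zero_mul]


lemma circ_vec_eq_zero (v : circSpace.carrier) (h1 : v.1 = 0) (h2 : v.2 = 0) : v = 0 := by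
  show v = ((0 : F2), (0 : F2))
  rw [Prod.ext_iff]; exact ⟨h1, h2⟩

lemma circ_graded : circSpace.IsGraded := by
  rw [GradedF2.IsGraded, DirectSum.isInternal_submodule_iff_iSupIndep_and_iSup_eq_top]
  constructor
  · intro d
    by_cases hd0 : d = 0
    · subst hd0
      have hle : (⨆ e, ⨆ _ : e ≠ (0:ℤ), circSpace.grading e) ≤
          (⊤ : Submodule F2 F2).prod ⊥ := by
        apply iSup_le; intro e; apply iSup_le; intro he
        intro v hv
        rw [mem_circ_grading] at hv
        exact ⟨trivial, hv.2 he⟩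
      rw [Submodule.disjoint_def]
      intro v h1 h2
      rw [mem_circ_grading] at h1
      exact circ_vec_eq_zero v (h1.1 (by omega)) (hle h2).2
    · by_cases hd1 : d = 1
      · subst hd1
        have hle : (⨆ e, ⨆ _ : e ≠ (1:ℤ), circSpace.grading e) ≤
            (⊥ : Submodule F2 F2).prod ⊤ := by
          apply iSup_le; intro e; apply iSup_le; intro he
          intro v hv
          rw [mem_circ_grading] at hv
          exact ⟨hv.1 he, trivial⟩
        rw [Submodule.disjoint_def]
        intro v h1 h2
        rw [mem_circ_grading] at h1
        exact circ_vec_eq_zero v (hle h2).1 (h1.2 (by omega))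
      · have hb : circSpace.grading d = ⊥ := by
          apply le_antisymm
          · intro v hv
            rw [mem_circ_grading] at hv
            rw [Submodule.mem_bot]
            exact circ_vec_eq_zero v (hv.1 hd1) (hv.2 hd0)
          · exact bot_le
        rw [hb]
        exact disjoint_bot_left
  · rw [eq_top_iff]
    intro v _
    have hv : v = ((v.1, 0) : F2 × F2) + ((0, v.2) : F2 × F2) := by
      show v = ((v.1 + 0, 0 + v.2) : F2 × F2)
      rw [Prod.ext_iff]; constructor <;> simp
    rw [hv]
    apply Submodule.add_mem
    · exact Submodule.mem_iSup_of_mem 1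
        (by rw [mem_circ_grading]; exact ⟨fun h => absurd rfl h, fun _ => rfl⟩)
    · exact Submodule.mem_iSup_of_mem 0
        (by rw [mem_circ_grading]; exact ⟨fun _ => rfl, fun h => absurd rfl h⟩)
lemma circ_m_ne {O : Type} (k : ℕ) (hk : k ≠ 1) (X : ℕ → O)
    (v : ∀ i : Fin (k+1), (((circCat O).Hom (X i.1) (X (i.1+1)))).carrier) :
    (circCat O).m k X v = 0 := dif_neg hk

lemma circ_m_one {O : Type} (X : ℕ → O)
    (v : ∀ i : Fin 2, (((circCat O).Hom (X i.1) (X (i.1+1)))).carrier) :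
    (circCat O).m 1 X v = circMul (v ⟨1, by omega⟩) (v ⟨0, by omega⟩) := by
  dsimp only [circCat]
  rfl

lemma diag_n_zero {O : Type} (r s : ℕ) (h : r + s ≠ 1) (X Y : ℕ → O) (c z d) :
    (diagBimod (circCat O)).n r s X Y c z d = 0 := by
  dsimp only [diagBimod, circCat]
  rw [dif_neg h]
  rfl

lemma diag_n_10 {O : Type} (X Y : ℕ → O) (c z d) :
    (diagBimod (circCat O)).n 1 0 X Y c z d = circMul (c ⟨0, by omega⟩) z := by
  dsimp only [diagBimod, circCat, diagTuple]
  norm_num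
  rfl

lemma diag_n_01 {O : Type} (X Y : ℕ → O) (c z d) :
    (diagBimod (circCat O)).n 0 1 X Y c z d = circMul z (d ⟨0, by omega⟩) := by
  dsimp only [diagBimod, circCat, diagTuple]
  norm_num
  rfl
lemma circMul_add_left (p p' q : F2 × F2) :
    circMul (p + p') q = circMul p q + circMul p' q := by
  apply Prod.ext <;> simp [circMul] <;> ring

lemma circMul_add_right (p q q' : F2 × F2) :
    circMul p (q + q') = circMul p q + circMul p q' := by
  apply Prod.ext <;> simp [circMul] <;> ring

lemma circMul_smul_left (a : F2) (p q : F2 × F2) :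
    circMul (a • p) q = a • circMul p q := by
  apply Prod.ext <;> simp [circMul] <;> ring

@[simp] lemma circMul_zero_left (q : F2 × F2) : circMul 0 q = 0 := by
  apply Prod.ext <;> simp [circMul]

@[simp] lemma circMul_zero_right (p : F2 × F2) : circMul p 0 = 0 := by
  apply Prod.ext <;> simp [circMul]

/-- right multiplication as a linear map -/
def mulRlin (q : F2 × F2) : (F2 × F2) →ₗ[F2] (F2 × F2) where
  toFun := fun p => circMul p q
  map_add' := fun p p' => circMul_add_left p p' q
  map_smul' := fun a p => circMul_smul_left a p q

def mulLlin (p : F2 × F2) : (F2 × F2) →ₗ[F2] (F2 × F2) where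
  toFun := fun q => circMul p q
  map_add' := fun q q' => circMul_add_right p q q'
  map_smul' := by
    intro a q
    apply Prod.ext <;> simp [circMul] <;> ring

section Mlemmas
variable {O : Type}

local notation "MM" O => shiftBimod (dualBimod (diagBimod (circCat O))) (-1)

lemma M_n_zero (r s : ℕ) (h : r + s ≠ 1) (X Y : ℕ → O) (c z d) :
    (shiftBimod (dualBimod (diagBimod (circCat O))) (-1)).n r s X Y c z d = 0 := by
  dsimp only [shiftBimod, dualBimod]
  apply toLin_eq _ 0
  intro w
  rw [diag_n_zero s r (by omega)]
  exact map_zero (show Module.Dual F2 (F2 × F2) from z)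

lemma M_n_10_apply (X Y : ℕ → O) (c z d) (w : F2 × F2) :
    (show Module.Dual F2 (F2 × F2) from
      (shiftBimod (dualBimod (diagBimod (circCat O))) (-1)).n 1 0 X Y c z d) w =
      (show Module.Dual F2 (F2 × F2) from z) (circMul w (c ⟨0, by omega⟩)) := by
  dsimp only [shiftBimod, dualBimod]
  erw [toLin_eq _ ((show Module.Dual F2 (F2 × F2) from z).comp (mulRlin (c ⟨0, by omega⟩)))]
  · rfl
  · intro u
    erw [diag_n_01]
    rfl

lemma M_n_01_apply (X Y : ℕ → O) (c z d) (w : F2 × F2) :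
    (show Module.Dual F2 (F2 × F2) from
      (shiftBimod (dualBimod (diagBimod (circCat O))) (-1)).n 0 1 X Y c z d) w =
      (show Module.Dual F2 (F2 × F2) from z) (circMul (d ⟨0, by omega⟩) w) := by
  dsimp only [shiftBimod, dualBimod]
  erw [toLin_eq _ ((show Module.Dual F2 (F2 × F2) from z).comp (mulLlin (d ⟨0, by omega⟩)))]
  · rfl
  · intro u
    erw [diag_n_10]
    rfl

lemma theta_00 (X Y : ℕ → O) (c z d) :
    (circTheta O).f 0 0 X Y c z d =
      ((show Module.Dual F2 (F2 × F2) from z) (0, 1), (show Module.Dual F2 (F2 × F2) from z) (1, 0)) := by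
  dsimp only [circTheta]
  erw [if_pos ⟨rfl, rfl⟩]

lemma theta_01 (X Y : ℕ → O) (c z d) :
    (circTheta O).f 0 1 X Y c z d =
      ((d ⟨0, by omega⟩).1 * (show Module.Dual F2 (F2 × F2) from z) (0, 1),
       (d ⟨0, by omega⟩).1 * (show Module.Dual F2 (F2 × F2) from z) (1, 0)) := by
  dsimp only [circTheta]
  erw [if_neg (by omega), dif_pos ⟨rfl, rfl⟩]

lemma theta_zero (r s : ℕ) (h : ¬(r = 0 ∧ s ≤ 1)) (X Y : ℕ → O) (c z d) :
    (circTheta O).f r s X Y c z d = 0 := by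
  dsimp only [circTheta]
  erw [if_neg (by omega), dif_neg (by omega)]

end Mlemmas
lemma circ_units (O : Type) :
    IsStrictUnits (circCat O) (fun _ => ((0 : F2), (1 : F2))) := by
  constructor
  · intro X
    dsimp only [circCat]
    rw [mem_circ_grading]
    exact ⟨fun _ => rfl, fun h => absurd rfl h⟩
  · intro X
    exact circ_m_ne 0 (by omega) _ _
  · intro X x h hx
    rw [circ_m_one]
    rw [show x ⟨1, by omega⟩ = _ from hx]
    rw [show scast (show (circCat O).Hom (X 1) (X 1) = (circCat O).Hom (X 1) (X 2) by rw [h])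
        ((0:F2),(1:F2)) = ((0:F2),(1:F2)) from eq_of_heq (cast_heq _ _)]
    rw [show scast (show (circCat O).Hom (X 0) (X 1) = (circCat O).Hom (X 0) (X 2) by rw [h])
        (x 0) = x 0 from eq_of_heq (cast_heq _ _)]
    show circMul ((0:F2),(1:F2)) (x ⟨0, by omega⟩) = x ⟨0, by omega⟩
    apply Prod.ext <;> simp [circMul]
  · intro X x h hx
    rw [circ_m_one]
    rw [show x ⟨0, by omega⟩ = _ from hx]
    rw [show scast (show (circCat O).Hom (X 0) (X 0) = (circCat O).Hom (X 0) (X 1) by rw [h])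
        ((0:F2),(1:F2)) = ((0:F2),(1:F2)) from eq_of_heq (cast_heq _ _)]
    rw [show scast (show (circCat O).Hom (X 1) (X 2) = (circCat O).Hom (X 0) (X 2) by rw [h])
        (x 1) = x 1 from eq_of_heq (cast_heq _ _)]
    show circMul (x ⟨1, by omega⟩) ((0:F2),(1:F2)) = x ⟨1, by omega⟩
    apply Prod.ext <;> simp [circMul]
  · intro k hk X x t h hx
    exact circ_m_ne k (by omega) X x

lemma circ_add (O : Type) : ∀ (k : ℕ) (X : ℕ → O)
    (x : ∀ i : Fin (k+1), (((circCat O).Hom (X i.1) (X (i.1 + 1)))).carrier)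
    (i : Fin (k+1)) (u v : (((circCat O).Hom (X i.1) (X (i.1 + 1)))).carrier),
    (circCat O).m k X (Function.update x i (u + v)) =
      (circCat O).m k X (Function.update x i u) + (circCat O).m k X (Function.update x i v) := by
  intro k X x i u v
  by_cases hk : k = 1
  · subst hk
    rw [circ_m_one, circ_m_one, circ_m_one]
    have hi : i = ⟨0, by omega⟩ ∨ i = ⟨1, by omega⟩ := by
      rcases i with ⟨iv, hiv⟩
      interval_cases iv
      · exact Or.inl rfl
      · exact Or.inr rfl
    have h01 : (⟨0, by omega⟩ : Fin 2) ≠ ⟨1, by omega⟩ := by simp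
    rcases hi with hi | hi <;> subst hi
    · rw [Function.update_self, Function.update_self, Function.update_self,
        Function.update_of_ne h01.symm, Function.update_of_ne h01.symm,
        Function.update_of_ne h01.symm]
      exact circMul_add_right _ _ _
    · rw [Function.update_self, Function.update_self, Function.update_self,
        Function.update_of_ne h01, Function.update_of_ne h01, Function.update_of_ne h01]
      exact circMul_add_left _ _ _
  · rw [circ_m_ne k hk, circ_m_ne k hk, circ_m_ne k hk, add_zero]

lemma circ_deg (O : Type) : ∀ (k : ℕ) (X : ℕ → O) (d : Fin (k+1) → ℤ)
    (x : ∀ i : Fin (k+1), (((circCat O).Hom (X i.1) (X (i.1 + 1)))).carrier),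
    (∀ i, x i ∈ (((circCat O).Hom (X i.1) (X (i.1 + 1)))).grading (d i)) →
    (circCat O).m k X x ∈
      (((circCat O).Hom (X 0) (X (k+1)))).grading ((∑ i, d i) + (2 - ((k : ℤ) + 1))) := by
  intro k X d x h
  by_cases hk : k = 1
  · subst hk
    rw [circ_m_one]
    have := circMul_mem (h ⟨1, by omega⟩) (h ⟨0, by omega⟩)
    have he : d ⟨1, by omega⟩ + d ⟨0, by omega⟩ = (∑ i, d i) + (2 - (((1:ℕ) : ℤ) + 1)) := by
      rw [Fin.sum_univ_two]
      push_cast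
      have e0 : (0 : Fin 2) = ⟨0, by omega⟩ := rfl
      have e1 : (1 : Fin 2) = ⟨1, by omega⟩ := rfl
      rw [e0, e1]
      ring
    rw [he] at this
    exact this
  · rw [circ_m_ne k hk]
    exact Submodule.zero_mem _
lemma circ_assoc_sum : ∀ a b c : F2 × F2,
    circMul a (circMul b c) + circMul (circMul a b) c = 0 := by decide

lemma scast_eq_zero {V W : GradedF2} (h : V = W) (v : V.carrier) (hv : v = 0) :
    scast h v = 0 := by cases h; rw [hv]; rfl

lemma circ_m_eq_dite {O : Type} (k : ℕ) (X : ℕ → O)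
    (v : ∀ i : Fin (k+1), (((circCat O).Hom (X i.1) (X (i.1 + 1)))).carrier) :
    (circCat O).m k X v =
      if h : k = 1 then circMul (v ⟨1, by omega⟩) (v ⟨0, by omega⟩) else 0 := rfl

lemma ctrIns_lt {O : Type} (n : ℕ) (X : ℕ → O)
    (x : ∀ i : Fin n, (((circCat O).Hom (X i.1) (X (i.1 + 1)))).carrier)
    (a j : ℕ) (h : a + (j+1) ≤ n) (t : Fin (n - (j+1) + 1)) (ht : t.1 < a) :
    ctrIns (circCat O) n X x a j h t = x ⟨t.1, by have := t.2; omega⟩ := by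
  unfold ctrIns
  rw [dif_pos ht]
  exact eq_of_heq (cast_heq _ _)

lemma ctrIns_mid {O : Type} (n : ℕ) (X : ℕ → O)
    (x : ∀ i : Fin n, (((circCat O).Hom (X i.1) (X (i.1 + 1)))).carrier)
    (a j : ℕ) (h : a + (j+1) ≤ n) (t : Fin (n - (j+1) + 1))
    (ht : ¬ t.1 < a) (ht2 : t.1 = a) :
    ctrIns (circCat O) n X x a j h t =
      (circCat O).m j (fun u => X (a + u)) (fun u => x ⟨a + u.1, by have := u.2; omega⟩) := by
  unfold ctrIns
  rw [dif_neg ht, dif_pos ht2]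
  exact eq_of_heq (cast_heq _ _)

lemma ctrIns_gt {O : Type} (n : ℕ) (X : ℕ → O)
    (x : ∀ i : Fin n, (((circCat O).Hom (X i.1) (X (i.1 + 1)))).carrier)
    (a j : ℕ) (h : a + (j+1) ≤ n) (t : Fin (n - (j+1) + 1))
    (ht : ¬ t.1 < a) (ht2 : ¬ t.1 = a) :
    ctrIns (circCat O) n X x a j h t = x ⟨t.1 + j, by have := t.2; omega⟩ := by
  unfold ctrIns
  rw [dif_neg ht, dif_neg ht2]
  exact eq_of_heq (cast_heq _ _)

lemma catComp_zero {O : Type} (K : ℕ) (X : ℕ → O)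
    (x : ∀ i : Fin (K+1), (((circCat O).Hom (X i.1) (X (i.1 + 1)))).carrier)
    (a j : ℕ) (h : a + j ≤ K) (hK : ¬(j = 1 ∧ K = 2)) :
    catComp (circCat O) K X x a j h = 0 := by
  by_cases h1 : K - j = 1
  · have hj : j ≠ 1 := by omega
    unfold catComp
    apply scast_eq_zero
    rw [circ_m_eq_dite, dif_pos h1]
    beta_reduce
    have ha : a ≤ 1 := by omega
    interval_cases a
    · rw [ctrIns_gt _ _ _ _ _ _ _ (by simp) (by simp)]
      rw [ctrIns_mid _ _ _ _ _ _ _ (by simp) (by simp)]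
      rw [circ_m_ne j hj, circMul_zero_right]
    · rw [ctrIns_mid _ _ _ _ _ _ _ (by simp) (by simp)]
      rw [circ_m_ne j hj, circMul_zero_left]
  · unfold catComp
    apply scast_eq_zero
    rw [circ_m_ne (K - j) h1]
set_option linter.unusedTactic false in
lemma catComp_201 {O : Type} (X : ℕ → O)
    (x : ∀ i : Fin 3, (((circCat O).Hom (X i.1) (X (i.1 + 1)))).carrier)
    (h : 0 + 1 ≤ 2) :
    catComp (circCat O) 2 X x 0 1 h =
      circMul (x ⟨2, by omega⟩) (circMul (x ⟨1, by omega⟩) (x ⟨0, by omega⟩)) := by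
  unfold catComp
  rw [show scast _ _ = _ from eq_of_heq (cast_heq _ _)]
  rw [circ_m_eq_dite, dif_pos (show 2 - 1 = 1 from rfl)]
  beta_reduce
  rw [ctrIns_gt _ _ _ _ _ _ _ (by simp) (by simp)]
  rw [ctrIns_mid _ _ _ _ _ _ _ (by simp) (by simp)]
  rw [circ_m_eq_dite, dif_pos rfl]
  beta_reduce
  rfl

set_option linter.unusedTactic false in
lemma catComp_211 {O : Type} (X : ℕ → O)
    (x : ∀ i : Fin 3, (((circCat O).Hom (X i.1) (X (i.1 + 1)))).carrier)
    (h : 1 + 1 ≤ 2) :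
    catComp (circCat O) 2 X x 1 1 h =
      circMul (circMul (x ⟨2, by omega⟩) (x ⟨1, by omega⟩)) (x ⟨0, by omega⟩) := by
  unfold catComp
  rw [show scast _ _ = _ from eq_of_heq (cast_heq _ _)]
  rw [circ_m_eq_dite, dif_pos (show 2 - 1 = 1 from rfl)]
  beta_reduce
  rw [ctrIns_mid _ _ _ _ _ _ _ (by simp) (by simp)]
  rw [ctrIns_lt _ _ _ _ _ _ _ (by simp)]
  rw [circ_m_eq_dite, dif_pos rfl]
  beta_reduce
  rfl

lemma circ_rel (O : Type) : ∀ (K : ℕ) (X : ℕ → O)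
    (x : ∀ i : Fin (K+1), (((circCat O).Hom (X i.1) (X (i.1 + 1)))).carrier),
    (∑ a ∈ Finset.range (K+1), ∑ j ∈ Finset.range (K+1),
      if h : a + j ≤ K then catComp (circCat O) K X x a j h else 0) = 0 := by
  intro K X x
  by_cases hK : K = 2
  · subst hK
    simp only [Finset.sum_range_succ, Finset.sum_range_zero, zero_add]
    have z00 : (if h : 0 + 0 ≤ 2 then catComp (circCat O) 2 X x 0 0 h else 0) = 0 := by
      split
      · exact catComp_zero _ _ _ _ _ _ (by omega)
      · rfl
    have z02 : (if h : 0 + 2 ≤ 2 then catComp (circCat O) 2 X x 0 2 h else 0) = 0 := by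
      split
      · exact catComp_zero _ _ _ _ _ _ (by omega)
      · rfl
    have z10 : (if h : 1 + 0 ≤ 2 then catComp (circCat O) 2 X x 1 0 h else 0) = 0 := by
      split
      · exact catComp_zero _ _ _ _ _ _ (by omega)
      · rfl
    have z12 : (if h : 1 + 2 ≤ 2 then catComp (circCat O) 2 X x 1 2 h else 0) = 0 := by
      split
      · exact catComp_zero _ _ _ _ _ _ (by omega)
      · rfl
    have z20 : (if h : 2 + 0 ≤ 2 then catComp (circCat O) 2 X x 2 0 h else 0) = 0 := by
      split
      · exact catComp_zero _ _ _ _ _ _ (by omega)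
      · rfl
    have z21 : (if h : 2 + 1 ≤ 2 then catComp (circCat O) 2 X x 2 1 h else 0) = 0 := by
      split
      · exact catComp_zero _ _ _ _ _ _ (by omega)
      · rfl
    have z22 : (if h : 2 + 2 ≤ 2 then catComp (circCat O) 2 X x 2 2 h else 0) = 0 := by
      split
      · exact catComp_zero _ _ _ _ _ _ (by omega)
      · rfl
    have e01 : (if h : 0 + 1 ≤ 2 then catComp (circCat O) 2 X x 0 1 h else 0) =
        circMul (x ⟨2, by omega⟩) (circMul (x ⟨1, by omega⟩) (x ⟨0, by omega⟩)) := by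
      split
      · exact catComp_201 X x _
      · omega
    have e11 : (if h : 1 + 1 ≤ 2 then catComp (circCat O) 2 X x 1 1 h else 0) =
        circMul (circMul (x ⟨2, by omega⟩) (x ⟨1, by omega⟩)) (x ⟨0, by omega⟩) := by
      split
      · exact catComp_211 X x _
      · omega
    rw [z00, z02, z10, z12, z20, z21, z22, e01, e11]
    have := circ_assoc_sum (x ⟨2, by omega⟩) (x ⟨1, by omega⟩) (x ⟨0, by omega⟩)
    calc _ = circMul (x ⟨2, by omega⟩) (circMul (x ⟨1, by omega⟩) (x ⟨0, by omega⟩)) +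
        circMul (circMul (x ⟨2, by omega⟩) (x ⟨1, by omega⟩)) (x ⟨0, by omega⟩) := by
          abel
      _ = 0 := this
  · apply Finset.sum_eq_zero
    intro a _
    apply Finset.sum_eq_zero
    intro j _
    split
    · exact catComp_zero _ _ _ _ _ _ (by omega)
    · rfl
lemma circ_cat (O : Type) : IsAInfCat (circCat O) :=
  ⟨fun _ _ => circ_graded, circ_add O, circ_deg O, circ_rel O⟩

lemma z_grading {O : Type} {X Y : O} {dz : ℤ}
    {z : (((shiftBimod (dualBimod (diagBimod (circCat O))) (-1)).space X Y)).carrier}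
    (hz : z ∈ (((shiftBimod (dualBimod (diagBimod (circCat O))) (-1)).space X Y)).grading dz) :
    (dz ≠ 1 → (show Module.Dual F2 (F2 × F2) from z) ((0:F2), (1:F2)) = 0) ∧
    (dz ≠ 0 → (show Module.Dual F2 (F2 × F2) from z) ((1:F2), (0:F2)) = 0) := by
  have hz' : ∀ e : ℤ, e ≠ -(dz + (-1)) → ∀ v ∈ circSpace.grading e,
      (show Module.Dual F2 (F2 × F2) from z) v = 0 := hz
  constructor
  · intro h
    exact hz' 0 (by omega) _ ((mem_circ_grading _ _).mpr ⟨fun _ => rfl, fun hh => absurd rfl hh⟩)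
  · intro h
    exact hz' 1 (by omega) _ ((mem_circ_grading _ _).mpr ⟨fun hh => absurd rfl hh, fun _ => rfl⟩)

lemma theta_premor (O : Type) : IsPreMor (circTheta O) 0 := by
  constructor
  · -- add_c
    intro r s X Y c i u v z d
    have hr : 0 < r := i.pos
    rw [theta_zero r s (by omega), theta_zero r s (by omega), theta_zero r s (by omega), add_zero]
  · -- add_z
    intro r s X Y c z z' d
    by_cases h0 : r = 0 ∧ s = 0
    · obtain ⟨rfl, rfl⟩ := h0
      rw [theta_00, theta_00, theta_00]
      rfl
    · by_cases h1 : r = 0 ∧ s = 1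
      · obtain ⟨rfl, rfl⟩ := h1
        rw [theta_01, theta_01, theta_01]
        apply Prod.ext
        · show _ * ((show Module.Dual F2 (F2 × F2) from z) + (show Module.Dual F2 (F2 × F2) from z')) _ = _
          rw [LinearMap.add_apply, mul_add]
          rfl
        · show _ * ((show Module.Dual F2 (F2 × F2) from z) + (show Module.Dual F2 (F2 × F2) from z')) _ = _
          rw [LinearMap.add_apply, mul_add]
          rfl
      · rw [theta_zero r s (by omega), theta_zero r s (by omega), theta_zero r s (by omega), add_zero]
  · -- add_d
    intro r s X Y c z d i u v
    by_cases h1 : r = 0 ∧ s = 1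
    · obtain ⟨rfl, rfl⟩ := h1
      obtain rfl : i = ⟨0, by omega⟩ := Subsingleton.elim _ _
      rw [theta_01, theta_01, theta_01, Function.update_self, Function.update_self,
        Function.update_self]
      apply Prod.ext
      · show (u + v).1 * _ = _
        rw [Prod.fst_add, add_mul]
        rfl
      · show (u + v).1 * _ = _
        rw [Prod.fst_add, add_mul]
        rfl
    · have hs : ¬ (r = 0 ∧ s ≤ 1) := by
        have : 0 < s := i.pos
        omega
      rw [theta_zero r s hs, theta_zero r s hs, theta_zero r s hs, add_zero]
  · -- deg
    intro r s X Y dc dz dd c z d hc hz hd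
    by_cases h0 : r = 0 ∧ s = 0
    · obtain ⟨rfl, rfl⟩ := h0
      rw [theta_00]
      have hzg := z_grading hz
      show _ ∈ circSpace.grading _
      rw [mem_circ_grading]
      constructor
      · intro hE
        apply hzg.1
        simp only [Finset.univ_eq_empty, Finset.sum_empty] at hE
        push_cast at hE
        omega
      · intro hE
        apply hzg.2
        simp only [Finset.univ_eq_empty, Finset.sum_empty] at hE
        push_cast at hE
        omega
    · by_cases h1 : r = 0 ∧ s = 1
      · obtain ⟨rfl, rfl⟩ := h1
        rw [theta_01]
        have hzg := z_grading hz
        show _ ∈ circSpace.grading _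
        rw [mem_circ_grading]
        by_cases hd1 : (d ⟨0, by omega⟩).1 = 0
        · rw [hd1, zero_mul, zero_mul]
          exact ⟨fun _ => rfl, fun _ => rfl⟩
        · have hdd : dd ⟨0, by omega⟩ = 1 := by
            by_contra hne
            exact hd1 (((mem_circ_grading _ _).mp (hd ⟨0, by omega⟩)).1 hne)
          constructor
          · intro hE
            rw [show (show Module.Dual F2 (F2 × F2) from z) ((0:F2),(1:F2)) = 0 from
              hzg.1 (by
                simp only [Finset.univ_eq_empty, Finset.sum_empty, Fin.sum_univ_one] at hE
                rw [show dd 0 = dd ⟨0, by omega⟩ from rfl, hdd] at hE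
                push_cast at hE
                omega), mul_zero]
          · intro hE
            rw [show (show Module.Dual F2 (F2 × F2) from z) ((1:F2),(0:F2)) = 0 from
              hzg.2 (by
                simp only [Finset.univ_eq_empty, Finset.sum_empty, Fin.sum_univ_one] at hE
                rw [show dd 0 = dd ⟨0, by omega⟩ from rfl, hdd] at hE
                push_cast at hE
                omega), mul_zero]
      · rw [theta_zero r s (by omega)]
        exact Submodule.zero_mem _
section flex
variable {O : Type}

lemma diag_n_10' (r s : ℕ) (hr : r = 1) (hs : s = 0) (X Y : ℕ → O) (c z d) :
    (diagBimod (circCat O)).n r s X Y c z d = circMul (c ⟨0, by omega⟩) z := by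
  subst hr; subst hs; exact diag_n_10 X Y c z d

lemma diag_n_01' (r s : ℕ) (hr : r = 0) (hs : s = 1) (X Y : ℕ → O) (c z d) :
    (diagBimod (circCat O)).n r s X Y c z d = circMul z (d ⟨0, by omega⟩) := by
  subst hr; subst hs; exact diag_n_01 X Y c z d

lemma theta_00' (r s : ℕ) (hr : r = 0) (hs : s = 0) (X Y : ℕ → O) (c z d) :
    (circTheta O).f r s X Y c z d =
      ((show Module.Dual F2 (F2 × F2) from z) ((0:F2), (1:F2)),
       (show Module.Dual F2 (F2 × F2) from z) ((1:F2), (0:F2))) := by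
  subst hr; subst hs; exact theta_00 X Y c z d

lemma theta_01' (r s : ℕ) (hr : r = 0) (hs : s = 1) (X Y : ℕ → O) (c z d) :
    (circTheta O).f r s X Y c z d =
      ((d ⟨0, by omega⟩).1 * (show Module.Dual F2 (F2 × F2) from z) ((0:F2), (1:F2)),
       (d ⟨0, by omega⟩).1 * (show Module.Dual F2 (F2 × F2) from z) ((1:F2), (0:F2))) := by
  subst hr; subst hs; exact theta_01 X Y c z d

lemma M_n_10' (r s : ℕ) (hr : r = 1) (hs : s = 0) (X Y : ℕ → O) (c z d) (w : F2 × F2) :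
    (show Module.Dual F2 (F2 × F2) from
      (shiftBimod (dualBimod (diagBimod (circCat O))) (-1)).n r s X Y c z d) w =
      (show Module.Dual F2 (F2 × F2) from z) (circMul w (c ⟨0, by omega⟩)) := by
  subst hr; subst hs; exact M_n_10_apply X Y c z d w

lemma M_n_01' (r s : ℕ) (hr : r = 0) (hs : s = 1) (X Y : ℕ → O) (c z d) (w : F2 × F2) :
    (show Module.Dual F2 (F2 × F2) from
      (shiftBimod (dualBimod (diagBimod (circCat O))) (-1)).n r s X Y c z d) w =
      (show Module.Dual F2 (F2 × F2) from z) (circMul (d ⟨0, by omega⟩) w) := by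
  subst hr; subst hs; exact M_n_01_apply X Y c z d w

lemma theta_z0 (r s : ℕ) (X Y : ℕ → O) (c d) :
    (circTheta O).f r s X Y c 0 d = 0 := by
  dsimp only [circTheta]
  by_cases h1 : r = 0 ∧ s = 0
  · erw [if_pos h1]
    rfl
  · erw [if_neg h1]
    by_cases h2 : r = 0 ∧ s = 1
    · erw [dif_pos h2]
      show ((_ * (0 : Module.Dual F2 (F2 × F2)) _, _ * (0 : Module.Dual F2 (F2 × F2)) _) : F2 × F2) = 0
      rw [LinearMap.zero_apply, mul_zero]
      rfl
    · erw [dif_neg h2]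

lemma diag_n_z0 (r s : ℕ) (X Y : ℕ → O) (c d) :
    (diagBimod (circCat O)).n r s X Y c 0 d = 0 := by
  by_cases h : r + s = 1
  · obtain ⟨rfl, rfl⟩ | ⟨rfl, rfl⟩ : (r = 0 ∧ s = 1) ∨ (r = 1 ∧ s = 0) := by omega
    · rw [diag_n_01]
      exact circMul_zero_left _
    · rw [diag_n_10]
      exact circMul_zero_right _
  · exact diag_n_zero r s h X Y c 0 d

lemma insC_theta_zero (r s : ℕ) (X Y : ℕ → O) (c z d) (a j : ℕ) (h : a + (j+1) ≤ r) :
    insC (circTheta O) r s X Y c z d a j h = 0 := by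
  unfold insC
  apply scast_eq_zero
  rw [theta_zero (r - (j+1) + 1) s (by omega)]

lemma insD_theta_zero (r s : ℕ) (X Y : ℕ → O) (c z d) (a j : ℕ) (h : a + (j+1) ≤ s)
    (hne : ¬(r = 0 ∧ s = 2 ∧ j = 1)) :
    insD (circTheta O) r s X Y c z d a j h = 0 := by
  unfold insD
  apply scast_eq_zero
  by_cases hs : r = 0 ∧ s = j + 1
  · -- θ^{0|1} with contracted input m^{j+1}, j ≠ 1 so input is 0
    obtain ⟨rfl, rfl⟩ := hs
    have hj : j ≠ 1 := by omega
    have ha : a = 0 := by omega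
    subst ha
    dsimp only [circTheta]
    erw [if_neg (by omega), dif_pos ⟨rfl, by omega⟩]
    rw [ctrIns_mid _ _ _ _ _ _ _ (by simp) (by simp)]
    rw [circ_m_ne j hj]
    show ((0:F2) * _, (0:F2) * _) = 0
    rw [zero_mul, zero_mul]
    rfl
  · rw [theta_zero r (s - (j+1) + 1) (by omega)]
@[simp] lemma scast_zero' {V W : GradedF2} (h : V = W) : scast h (0 : V.carrier) = 0 :=
  scast_eq_zero h 0 rfl

lemma key10 : ∀ (p : F2 × F2) (l : Module.Dual F2 (F2 × F2)),
    circMul p (l ((0:F2), (1:F2)), l ((1:F2), (0:F2))) +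
      (l (circMul ((0:F2), (1:F2)) p), l (circMul ((1:F2), (0:F2)) p)) = 0 := by
  intro p l
  rw [dual_apply l (circMul ((0:F2), (1:F2)) p), dual_apply l (circMul ((1:F2), (0:F2)) p)]
  generalize l ((1:F2), (0:F2)) = A
  generalize l ((0:F2), (1:F2)) = B
  revert p A B
  decide

lemma key01 : ∀ (p : F2 × F2) (l : Module.Dual F2 (F2 × F2)),
    circMul (l ((0:F2), (1:F2)), l ((1:F2), (0:F2))) p +
      (l (circMul p ((0:F2), (1:F2))), l (circMul p ((1:F2), (0:F2)))) = 0 := by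
  intro p l
  rw [dual_apply l (circMul p ((0:F2), (1:F2))), dual_apply l (circMul p ((1:F2), (0:F2)))]
  generalize l ((1:F2), (0:F2)) = A
  generalize l ((0:F2), (1:F2)) = B
  revert p A B
  decide

lemma key11 : ∀ (p q : F2 × F2) (l : Module.Dual F2 (F2 × F2)),
    circMul p (q.1 * l ((0:F2), (1:F2)), q.1 * l ((1:F2), (0:F2))) +
      (q.1 * l (circMul ((0:F2), (1:F2)) p), q.1 * l (circMul ((1:F2), (0:F2)) p)) = 0 := by
  intro p q l
  rw [dual_apply l (circMul ((0:F2), (1:F2)) p), dual_apply l (circMul ((1:F2), (0:F2)) p)]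
  generalize l ((1:F2), (0:F2)) = A
  generalize l ((0:F2), (1:F2)) = B
  revert p q A B
  decide

lemma key02 : ∀ (p q : F2 × F2) (l : Module.Dual F2 (F2 × F2)),
    circMul (q.1 * l ((0:F2), (1:F2)), q.1 * l ((1:F2), (0:F2))) p +
      (p.1 * l (circMul q ((0:F2), (1:F2))), p.1 * l (circMul q ((1:F2), (0:F2)))) +
      ((circMul q p).1 * l ((0:F2), (1:F2)), (circMul q p).1 * l ((1:F2), (0:F2))) = 0 := by
  intro p q l
  rw [dual_apply l (circMul q ((0:F2), (1:F2))), dual_apply l (circMul q ((1:F2), (0:F2)))]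
  generalize l ((1:F2), (0:F2)) = A
  generalize l ((0:F2), (1:F2)) = B
  revert p q A B
  decide

set_option linter.unusedTactic false in
lemma insD_special {O : Type} (X Y : ℕ → O) (c z d) (h : 0 + (1+1) ≤ 2) :
    insD (circTheta O) 0 2 X Y c z d 0 1 h =
      ((circMul (d ⟨1, by omega⟩) (d ⟨0, by omega⟩)).1 *
         (show Module.Dual F2 (F2 × F2) from z) ((0:F2), (1:F2)),
       (circMul (d ⟨1, by omega⟩) (d ⟨0, by omega⟩)).1 *
         (show Module.Dual F2 (F2 × F2) from z) ((1:F2), (0:F2))) := by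
  unfold insD
  erw [show scast _ _ = _ from eq_of_heq (cast_heq _ _)]
  erw [show scast (V := (shiftBimod (dualBimod (diagBimod (circCat O))) (-1)).space (X 0) (Y 2)) _ z = z from eq_of_heq (cast_heq _ _)]
  erw [theta_01' 0 (2 - (1+1) + 1) rfl (by omega)]
  rw [ctrIns_mid _ _ _ _ _ _ _ (by simp) (by simp)]
  rw [circ_m_one]
  rfl
theorem theta_delta (O : Type) :
    deltaPre (circTheta O) =
      zeroPre (shiftBimod (dualBimod (diagBimod (circCat O))) (-1)) (diagBimod (circCat O)) := by
  have h : (deltaPre (circTheta O)).f =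
      (zeroPre (shiftBimod (dualBimod (diagBimod (circCat O))) (-1)) (diagBimod (circCat O))).f := by
    funext r s X Y c z d
    show (compPre (toPre (diagBimod (circCat O))) (circTheta O)).f r s X Y c z d +
      (compPre (circTheta O) (toPre (shiftBimod (dualBimod (diagBimod (circCat O))) (-1)))).f
        r s X Y c z d +
      (∑ a ∈ Finset.range (r+1), ∑ j ∈ Finset.range (r+1),
        if h : a + (j+1) ≤ r then insC (circTheta O) r s X Y c z d a j h else 0) +
      (∑ a ∈ Finset.range (s+1), ∑ j ∈ Finset.range (s+1),
        if h : a + (j+1) ≤ s then insD (circTheta O) r s X Y c z d a j h else 0) = 0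
    have hSC : (∑ a ∈ Finset.range (r+1), ∑ j ∈ Finset.range (r+1),
        if h : a + (j+1) ≤ r then insC (circTheta O) r s X Y c z d a j h else 0) = 0 := by
      apply Finset.sum_eq_zero; intro a _; apply Finset.sum_eq_zero; intro j _
      split
      · exact insC_theta_zero _ _ _ _ _ _ _ _ _ _
      · rfl
    rw [hSC, add_zero]
    by_cases hsp : (r ≤ 1 ∧ s ≤ 1) ∨ (r = 0 ∧ s = 2)
    · obtain ⟨rfl, rfl⟩ | ⟨rfl, rfl⟩ | ⟨rfl, rfl⟩ | ⟨rfl, rfl⟩ | ⟨rfl, rfl⟩ :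
          (r = 0 ∧ s = 0) ∨ (r = 1 ∧ s = 0) ∨ (r = 0 ∧ s = 1) ∨ (r = 1 ∧ s = 1) ∨
          (r = 0 ∧ s = 2) := by omega
      · have hA : (compPre (toPre (diagBimod (circCat O))) (circTheta O)).f 0 0 X Y c z d = 0 := by
          dsimp only [compPre, toPre]
          rw [Finset.sum_range_one, Finset.sum_range_one]
          split
          · apply scast_eq_zero
            exact diag_n_zero _ _ (by omega) _ _ _ _ _
          · rfl
        have hB : (compPre (circTheta O)
            (toPre (shiftBimod (dualBimod (diagBimod (circCat O))) (-1)))).f 0 0 X Y c z d = 0 := by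
          dsimp only [compPre, toPre]
          rw [Finset.sum_range_one, Finset.sum_range_one]
          split
          · apply scast_eq_zero
            rw [M_n_zero 0 0 (by omega)]
            exact theta_z0 _ _ _ _ _ _
          · rfl
        have hSD : (∑ a ∈ Finset.range (0+1), ∑ j ∈ Finset.range (0+1),
            if h : a + (j+1) ≤ 0 then insD (circTheta O) 0 0 X Y c z d a j h else 0) = 0 := by
          apply Finset.sum_eq_zero; intro a _; apply Finset.sum_eq_zero; intro j _
          split
          · exact insD_theta_zero _ _ _ _ _ _ _ _ _ _ (by omega)
          · rfl
        rw [hA, hB, hSD, add_zero, add_zero]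
      · have hSD : (∑ a ∈ Finset.range (0+1), ∑ j ∈ Finset.range (0+1),
            if h : a + (j+1) ≤ 0 then insD (circTheta O) 1 0 X Y c z d a j h else 0) = 0 := by
          apply Finset.sum_eq_zero; intro a _; apply Finset.sum_eq_zero; intro j _
          split
          · exact insD_theta_zero _ _ _ _ _ _ _ _ _ _ (by omega)
          · rfl
        rw [hSD, add_zero]
        dsimp only [compPre, toPre]
        simp only [Finset.sum_range_succ, Finset.sum_range_zero, Finset.sum_range_one, zero_add]
        rw [dif_pos (⟨by omega, by omega⟩ : (0:ℕ) ≤ 1 ∧ (0:ℕ) ≤ 0),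
          dif_pos (⟨by omega, by omega⟩ : (1:ℕ) ≤ 1 ∧ (0:ℕ) ≤ 0),
          dif_pos (⟨by omega, by omega⟩ : (0:ℕ) ≤ 1 ∧ (0:ℕ) ≤ 0),
          dif_pos (⟨by omega, by omega⟩ : (1:ℕ) ≤ 1 ∧ (0:ℕ) ≤ 0)]
        rw [show scast (V := (shiftBimod (dualBimod (diagBimod (circCat O))) (-1)).space (X 0) (Y 0)) _ z = z from eq_of_heq (cast_heq _ _)]
        rw [theta_zero 1 0 (by omega), theta_zero (1-0) (0-0) (by omega)]
        rw [diag_n_z0, scast_zero', add_zero, zero_add]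
        rw [diag_n_10' (1-0) (0-0) (by omega) (by omega)]
        rw [theta_00' 0 0 rfl rfl]
        rw [theta_00' (1-1) (0-0) (by omega) (by omega)]
        rw [M_n_10_apply _ _ _ _ _ _, M_n_10_apply _ _ _ _ _ _]
        erw [show scast _ _ = _ from eq_of_heq (cast_heq _ _)]
        erw [show scast _ _ = _ from eq_of_heq (cast_heq _ _)]
        erw [show ∀ q : F2 × F2, (0 : F2 × F2) + q = q from zero_add]; exact key10 _ _
      · have hSD : (∑ a ∈ Finset.range (1+1), ∑ j ∈ Finset.range (1+1),
            if h : a + (j+1) ≤ 1 then insD (circTheta O) 0 1 X Y c z d a j h else 0) = 0 := by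
          apply Finset.sum_eq_zero; intro a _; apply Finset.sum_eq_zero; intro j _
          split
          · exact insD_theta_zero _ _ _ _ _ _ _ _ _ _ (by omega)
          · rfl
        rw [hSD, add_zero]
        dsimp only [compPre, toPre]
        simp only [Finset.sum_range_succ, Finset.sum_range_zero, Finset.sum_range_one, zero_add]
        rw [dif_pos (⟨by omega, by omega⟩ : (0:ℕ) ≤ 0 ∧ (0:ℕ) ≤ 1),
          dif_pos (⟨by omega, by omega⟩ : (0:ℕ) ≤ 0 ∧ (1:ℕ) ≤ 1),
          dif_pos (⟨by omega, by omega⟩ : (0:ℕ) ≤ 0 ∧ (0:ℕ) ≤ 1),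
          dif_pos (⟨by omega, by omega⟩ : (0:ℕ) ≤ 0 ∧ (1:ℕ) ≤ 1)]
        rw [show scast (V := (shiftBimod (dualBimod (diagBimod (circCat O))) (-1)).space (X 0) (Y 1)) _ z = z from eq_of_heq (cast_heq _ _)]
        rw [M_n_zero 0 0 (by omega), theta_z0, scast_zero']
        rw [diag_n_zero (0-0) (1-1) (by omega), scast_zero']
        rw [diag_n_01' (0-0) (1-0) (by omega) (by omega)]
        rw [theta_00' 0 0 rfl rfl]
        rw [theta_00' (0-0) (1-1) (by omega) (by omega)]
        rw [M_n_01_apply _ _ _ _ _ _, M_n_01_apply _ _ _ _ _ _]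
        erw [show scast _ _ = _ from eq_of_heq (cast_heq _ _)]
        erw [show scast _ _ = _ from eq_of_heq (cast_heq _ _)]
        erw [add_zero, zero_add]; exact key01 _ _
      · have hSD : (∑ a ∈ Finset.range (1+1), ∑ j ∈ Finset.range (1+1),
            if h : a + (j+1) ≤ 1 then insD (circTheta O) 1 1 X Y c z d a j h else 0) = 0 := by
          apply Finset.sum_eq_zero; intro a _; apply Finset.sum_eq_zero; intro j _
          split
          · exact insD_theta_zero _ _ _ _ _ _ _ _ _ _ (by omega)
          · rfl
        rw [hSD, add_zero]
        dsimp only [compPre, toPre]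
        simp only [Finset.sum_range_succ, Finset.sum_range_zero, Finset.sum_range_one, zero_add]
        rw [dif_pos (⟨by omega, by omega⟩ : (0:ℕ) ≤ 1 ∧ (0:ℕ) ≤ 1),
          dif_pos (⟨by omega, by omega⟩ : (0:ℕ) ≤ 1 ∧ (1:ℕ) ≤ 1),
          dif_pos (⟨by omega, by omega⟩ : (1:ℕ) ≤ 1 ∧ (0:ℕ) ≤ 1),
          dif_pos (⟨by omega, by omega⟩ : (1:ℕ) ≤ 1 ∧ (1:ℕ) ≤ 1),
          dif_pos (⟨by omega, by omega⟩ : (0:ℕ) ≤ 1 ∧ (0:ℕ) ≤ 1),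
          dif_pos (⟨by omega, by omega⟩ : (0:ℕ) ≤ 1 ∧ (1:ℕ) ≤ 1),
          dif_pos (⟨by omega, by omega⟩ : (1:ℕ) ≤ 1 ∧ (0:ℕ) ≤ 1),
          dif_pos (⟨by omega, by omega⟩ : (1:ℕ) ≤ 1 ∧ (1:ℕ) ≤ 1)]
        rw [show scast (V := (shiftBimod (dualBimod (diagBimod (circCat O))) (-1)).space (X 0) (Y 1)) _ z = z from eq_of_heq (cast_heq _ _)]
        rw [diag_n_zero (1-0) (1-0) (by omega), scast_zero']
        rw [diag_n_zero (1-1) (1-1) (by omega), scast_zero']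
        rw [theta_zero 1 0 (by omega)]
        rw [diag_n_01' (1-1) (1-0) (by omega) (by omega)]; erw [circMul_zero_left, scast_zero']
        rw [M_n_zero 1 1 (by omega), theta_z0, scast_zero']
        rw [diag_n_10' (1-0) (1-1) (by omega) (by omega)]
        rw [theta_01 _ _ _ _ _]
        rw [theta_01' (1-1) (1-0) (by omega) (by omega)]
        rw [M_n_10_apply _ _ _ _ _ _, M_n_10_apply _ _ _ _ _ _]
        erw [show scast _ _ = _ from eq_of_heq (cast_heq _ _)]
        erw [show scast _ _ = _ from eq_of_heq (cast_heq _ _)]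
        show (0 : F2 × F2) + _ + ((0 : F2 × F2) + 0) + ((0 : F2 × F2) + 0 + (_ + 0)) = 0
        simpa only [zero_add, add_zero] using key11 _ _ _
      · dsimp only [compPre, toPre]
        simp only [Finset.sum_range_succ, Finset.sum_range_zero, Finset.sum_range_one, zero_add]
        rw [dif_pos (⟨by omega, by omega⟩ : (0:ℕ) ≤ 0 ∧ (0:ℕ) ≤ 2),
          dif_pos (⟨by omega, by omega⟩ : (0:ℕ) ≤ 0 ∧ (1:ℕ) ≤ 2),
          dif_pos (⟨by omega, by omega⟩ : (0:ℕ) ≤ 0 ∧ (2:ℕ) ≤ 2),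
          dif_pos (⟨by omega, by omega⟩ : (0:ℕ) ≤ 0 ∧ (0:ℕ) ≤ 2),
          dif_pos (⟨by omega, by omega⟩ : (0:ℕ) ≤ 0 ∧ (1:ℕ) ≤ 2),
          dif_pos (⟨by omega, by omega⟩ : (0:ℕ) ≤ 0 ∧ (2:ℕ) ≤ 2),
          dif_pos (by omega : (0:ℕ) + (0+1) ≤ 2),
          dif_pos (by omega : (0:ℕ) + (1+1) ≤ 2),
          dif_neg (by omega : ¬ (0:ℕ) + (2+1) ≤ 2),
          dif_pos (by omega : (1:ℕ) + (0+1) ≤ 2),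
          dif_neg (by omega : ¬ (1:ℕ) + (1+1) ≤ 2),
          dif_neg (by omega : ¬ (1:ℕ) + (2+1) ≤ 2),
          dif_neg (by omega : ¬ (2:ℕ) + (0+1) ≤ 2),
          dif_neg (by omega : ¬ (2:ℕ) + (1+1) ≤ 2),
          dif_neg (by omega : ¬ (2:ℕ) + (2+1) ≤ 2)]
        rw [show scast (V := (shiftBimod (dualBimod (diagBimod (circCat O))) (-1)).space (X 0) (Y 2)) _ z = z from eq_of_heq (cast_heq _ _)]
        rw [insD_theta_zero (O := O) 0 2 X Y c z d 0 0 (by omega) (by omega),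
          insD_theta_zero (O := O) 0 2 X Y c z d 1 0 (by omega) (by omega)]
        rw [insD_special (O := O) X Y c z d (by omega)]
        rw [diag_n_zero (0-0) (2-0) (by omega), scast_zero']
        rw [diag_n_zero (0-0) (2-2) (by omega), scast_zero']
        rw [theta_zero (0-0) (2-0) (by omega), scast_zero']
        rw [M_n_zero 0 2 (by omega), theta_z0, scast_zero']
        rw [diag_n_01' (0-0) (2-1) (by omega) (by omega)]
        rw [theta_01 _ _ _ _ _]
        rw [theta_01' (0-0) (2-1) (by omega) (by omega)]
        rw [M_n_01_apply _ _ _ _ _ _, M_n_01_apply _ _ _ _ _ _]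
        erw [show scast _ _ = _ from eq_of_heq (cast_heq _ _)]
        erw [show scast _ _ = _ from eq_of_heq (cast_heq _ _)]
        show (0 : F2 × F2) + _ + 0 + ((0 : F2 × F2) + _ + 0) + ((0 : F2 × F2) + _ + 0 + ((0 : F2 × F2) + 0 + 0) + ((0 : F2 × F2) + 0 + 0)) = 0
        simpa only [zero_add, add_zero] using key02 _ _ _
    · -- generic case: every term vanishes
      have hSD : (∑ a ∈ Finset.range (s+1), ∑ j ∈ Finset.range (s+1),
          if h : a + (j+1) ≤ s then insD (circTheta O) r s X Y c z d a j h else 0) = 0 := by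
        apply Finset.sum_eq_zero; intro a _; apply Finset.sum_eq_zero; intro j _
        split
        · exact insD_theta_zero _ _ _ _ _ _ _ _ _ _ (by omega)
        · rfl
      have hA : (compPre (toPre (diagBimod (circCat O))) (circTheta O)).f r s X Y c z d = 0 := by
        dsimp only [compPre, toPre]
        apply Finset.sum_eq_zero; intro i hi; apply Finset.sum_eq_zero; intro j hj
        rw [Finset.mem_range] at hi hj
        split
        case isTrue hc =>
          apply scast_eq_zero
          by_cases hn : (r - i) + (s - j) = 1
          · rw [theta_zero i j (by omega)]
            exact diag_n_z0 _ _ _ _ _ _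
          · exact diag_n_zero _ _ hn _ _ _ _ _
        case isFalse => rfl
      have hB : (compPre (circTheta O)
          (toPre (shiftBimod (dualBimod (diagBimod (circCat O))) (-1)))).f r s X Y c z d = 0 := by
        dsimp only [compPre, toPre]
        apply Finset.sum_eq_zero; intro i hi; apply Finset.sum_eq_zero; intro j hj
        rw [Finset.mem_range] at hi hj
        split
        case isTrue hc =>
          apply scast_eq_zero
          by_cases hθ : r - i = 0 ∧ s - j ≤ 1
          · rw [M_n_zero i j (by omega)]
            exact theta_z0 _ _ _ _ _ _
          · rw [theta_zero (r - i) (s - j) (by omega)]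
        case isFalse => rfl
      rw [hA, hB, hSD, zero_add, zero_add]
  exact congrArg PreMorData.mk h
lemma bdiffN {O : Type} (X Y : O) (z) :
    bdiff (diagBimod (circCat O)) X Y z = 0 :=
  diag_n_zero 0 0 (by omega) _ _ _ _ _

lemma bdiffM {O : Type} (X Y : O) (z) :
    bdiff (shiftBimod (dualBimod (diagBimod (circCat O))) (-1)) X Y z = 0 :=
  M_n_zero 0 0 (by omega) _ _ _ _ _

lemma theta_qiso (O : Type) : QIso (circTheta O) := by
  intro X Y
  constructor
  · intro z hz hex
    obtain ⟨u, hu⟩ := hex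
    rw [bdiffN] at hu
    unfold comp00 at hu
    rw [theta_00] at hu
    have h1 : (show Module.Dual F2 (F2 × F2) from z) ((0:F2),(1:F2)) = 0 := congrArg Prod.fst hu
    have h2 : (show Module.Dual F2 (F2 × F2) from z) ((1:F2),(0:F2)) = 0 := congrArg Prod.snd hu
    refine ⟨z, ?_⟩
    rw [bdiffM]
    have hz0 : (show Module.Dual F2 (F2 × F2) from z) = 0 := by
      apply LinearMap.ext
      intro p
      rw [LinearMap.zero_apply, dual_apply, h1, h2, mul_zero, mul_zero, add_zero]
    exact hz0
  · intro z' hz'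
    refine ⟨(z'.2 • LinearMap.fst F2 F2 F2 + z'.1 • LinearMap.snd F2 F2 F2 :
        Module.Dual F2 (F2 × F2)), ?_, z', ?_⟩
    · exact bdiffM X Y _
    · rw [bdiffN]
      unfold comp00
      erw [theta_00]
      have hl1 : ((z'.2 • LinearMap.fst F2 F2 F2 + z'.1 • LinearMap.snd F2 F2 F2 :
          Module.Dual F2 (F2 × F2))) ((0:F2),(1:F2)) = z'.1 := by
        simp
      have hl2 : ((z'.2 • LinearMap.fst F2 F2 F2 + z'.1 • LinearMap.snd F2 F2 F2 :
          Module.Dual F2 (F2 × F2))) ((1:F2),(0:F2)) = z'.2 := by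
        simp
      rw [show (show Module.Dual F2 (F2 × F2) from
          (z'.2 • LinearMap.fst F2 F2 F2 + z'.1 • LinearMap.snd F2 F2 F2 :
            Module.Dual F2 (F2 × F2))) ((0:F2),(1:F2)) = z'.1 from hl1,
        show (show Module.Dual F2 (F2 × F2) from
          (z'.2 • LinearMap.fst F2 F2 F2 + z'.1 • LinearMap.snd F2 F2 F2 :
            Module.Dual F2 (F2 × F2))) ((1:F2),(0:F2)) = z'.2 from hl2]
      have key : ∀ p : F2 × F2, ((p.1, p.2) : F2 × F2) + p = 0 := by decide
      exact key z'

theorem stmt_9' (O : Type) (hO : Nonempty O) :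
    IsAInfCat (circCat O) ∧
    IsStrictUnits (circCat O) (fun _ => ((0 : F2), (1 : F2))) ∧
    IsPreMor (circTheta O) 0 ∧
    IsMorphism (circTheta O) 0 ∧
    QIso (circTheta O) :=
  ⟨circ_cat O, circ_units O, theta_premor O,
    ⟨theta_premor O, theta_delta O⟩, theta_qiso O⟩

/-- the circle category is a strictly unital A∞ category over 𝔽₂
(with strict units `y`), and `θ` is a degree-0 bimodule quasi-isomorphism
`C^∨[-1] → C_Δ` (a weak Calabi-Yau structure of dimension 1). -/
theorem stmt_9 (O : Type) (hO : Nonempty O) :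
    IsAInfCat (circCat O) ∧
    IsStrictUnits (circCat O) (fun _ => ((0 : F2), (1 : F2))) ∧
    IsPreMor (circTheta O) 0 ∧
    IsMorphism (circTheta O) 0 ∧
    QIso (circTheta O) := by
  exact ⟨circ_cat O, circ_units O, theta_premor O, ⟨theta_premor O, theta_delta O⟩, theta_qiso O⟩
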